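/- arXiv:1909.12275 — 6 statements merged into one kernel-verified Lean document; each statement's English description precedes it below -/
import Mathlib

section
/- For nonnegative reals α_ii^[l] indexed by pairs (l,i), suppose the TIN BC-type condition holds: for all i and all l' < l, either α_ii^[l] ≥ α_ij^[l] + α_ii^[l'] or α_ii^[l] ≥ 2α_ij^[l] + α_ii^[l'] - α_ij^[l'] (for all j ≠ i), and the TIN IC-type condition holds: α_ii^[1] ≥ α_ij^[1] + α_ki^[l_k] for all j,k ≠ i and all l_k, where users in each cell are ordered so that α_ii^[1] ≤ α_ii^[2] ≤ ⋯. Then for every user index l_i in cell i and every user l_k in cell k ≠ i and every j ≠ i, one has α_ii^[l_i] ≥ α_ij^[l_i] + α_ki^[l_k]. -/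
/-! Users above the weakest one inherit the IC-type condition from it through the BC-type
chain condition with `l' = 0`: both alternatives of that condition dominate
`α_ij^[l] + α_ii^[0] - α_ij^[0]`, and `α_ii^[0] - α_ij^[0] ≥ α_ki^[l_k]` is the IC-type
condition of the weakest user. -/

theorem add_le_of_bc_chain {R : Type*} [Field R] [LinearOrder R] [IsStrictOrderedRing R]
    {x y a b c : R} (hb : 0 ≤ b) (hy : 0 ≤ y) (hweak : b + c ≤ a)
    (hchain : y + a ≤ x ∨ 2 * y + a - b ≤ x) : y + c ≤ x := by
  rcases hchain with h | h <;> linarith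

theorem stmt2_general (K : ℕ) (L : Fin K → ℕ) (hL : ∀ k, 0 < L k)
    (α : (k : Fin K) → Fin (L k) → Fin K → ℝ)
    (hnonneg : ∀ k l i, 0 ≤ α k l i)
    (hBC : ∀ i : Fin K, ∀ l' l : Fin (L i), l' < l → ∀ j : Fin K, j ≠ i →
      (α i l i ≥ α i l j + α i l' i ∨ α i l i ≥ 2 * α i l j + α i l' i - α i l' j))
    (hIC : ∀ i j k : Fin K, i ≠ j → i ≠ k → ∀ lk : Fin (L k),
      α i ⟨0, hL i⟩ i ≥ α i ⟨0, hL i⟩ j + α k lk i) :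
    ∀ i j k : Fin K, i ≠ j → i ≠ k → ∀ li : Fin (L i), ∀ lk : Fin (L k),
      α i li i ≥ α i li j + α k lk i := by
  intro i j k hij hik li lk
  by_cases hweakest : li = ⟨0, hL i⟩
  · exact hweakest ▸ hIC i j k hij hik lk
  · have hlt : (⟨0, hL i⟩ : Fin (L i)) < li :=
      lt_of_le_of_ne (Fin.mk_le_of_le_val (Nat.zero_le _)) (Ne.symm hweakest)
    exact add_le_of_bc_chain (hnonneg i _ j) (hnonneg i li j) (hIC i j k hij hik lk)
      (hBC i _ li hlt j hij.symm)

/-- equation (34), Remark 4: in a `K`-cell network with channel strengths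
`α k l i = α_{ki}^{[l]}` (strength from BS-`i` to user `l` of cell `k`), users in each cell
ordered by ascending direct strength, the TIN-regime conditions (BC-type chain condition plus
IC-type condition imposed on the weakest user of each cell) imply the IC-type condition
`α_{ii}^{[l_i]} ≥ α_{ij}^{[l_i]} + α_{ki}^{[l_k]}` for every user of every cell. -/
theorem stmt2 (K : ℕ) (L : Fin K → ℕ) (hL : ∀ k, 0 < L k)
    (α : (k : Fin K) → Fin (L k) → Fin K → ℝ)
    (hnonneg : ∀ k l i, 0 ≤ α k l i)
    (hsorted : ∀ k, ∀ l l' : Fin (L k), l ≤ l' → α k l k ≤ α k l' k)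
    (hBC : ∀ i : Fin K, ∀ l' l : Fin (L i), l' < l → ∀ j : Fin K, j ≠ i →
      (α i l i ≥ α i l j + α i l' i ∨ α i l i ≥ 2 * α i l j + α i l' i - α i l' j))
    (hIC : ∀ i j k : Fin K, i ≠ j → i ≠ k → ∀ lk : Fin (L k),
      α i ⟨0, hL i⟩ i ≥ α i ⟨0, hL i⟩ j + α k lk i) :
    ∀ i j k : Fin K, i ≠ j → i ≠ k → ∀ li : Fin (L i), ∀ lk : Fin (L k),
      α i li i ≥ α i li j + α k lk i :=
  stmt2_general K L hL α hnonneg hBC hIC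
end

section
/- For nonnegative reals α as above, suppose the CTIN conditions hold: for all cells i,j with j ≠ i and all l' < l, α_ii^[l] ≥ α_ij^[l] + α_ii^[l'] - α_ij^[l'], and for all i,j,k with i ∉ {j,k}, α_ii^[1] ≥ α_ij^[1] + α_ki^[l_k] - α_kj^[l_k]·1{k ≠ j} for all l_k. Then for every l_i, every l_k, and all admissible j,k: α_ii^[l_i] ≥ α_ij^[l_i] + α_ki^[l_k] - α_kj^[l_k]·1{k ≠ j}. -/
/-- equation (33), Remark 4: the CTIN-regime conditions (BC-type condition
plus IC-type condition imposed on the weakest user of each cell) imply the IC-type CTIN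
condition for every user of every cell. Here `α k l i = α_{ki}^{[l]}` is the strength
from BS-`i` to user `l` of cell `k`, users sorted by ascending direct strength. -/
theorem stmt3 (K : ℕ) (L : Fin K → ℕ) (hL : ∀ k, 0 < L k)
    (α : (k : Fin K) → Fin (L k) → Fin K → ℝ)
    (hnonneg : ∀ k l i, 0 ≤ α k l i)
    (hsorted : ∀ k, ∀ l l' : Fin (L k), l ≤ l' → α k l k ≤ α k l' k)
    (hBC : ∀ i j : Fin K, j ≠ i → ∀ l' l : Fin (L i), l' < l →
      α i l i ≥ α i l j + α i l' i - α i l' j)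
    (hIC : ∀ i j k : Fin K, i ≠ j → i ≠ k → ∀ lk : Fin (L k),
      α i ⟨0, hL i⟩ i ≥ α i ⟨0, hL i⟩ j + α k lk i - (if k = j then 0 else α k lk j)) :
    ∀ i j k : Fin K, i ≠ j → i ≠ k → ∀ li : Fin (L i), ∀ lk : Fin (L k),
      α i li i ≥ α i li j + α k lk i - (if k = j then 0 else α k lk j) := by
  intro i j k hij hik li lk
  have h0 := hIC i j k hij hik lk
  rcases Nat.eq_zero_or_pos li.val with h | h
  · have : li = ⟨0, hL i⟩ := Fin.ext h
    rw [this]; exact h0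
  · have hBC' := hBC i j hij.symm ⟨0, hL i⟩ li (by exact Fin.lt_def.mpr h)
    linarith
end

section
/- With the same setup, for every user (l_j, j) with j ≠ k and every user π_k(l_k) of cell k: γ_j^[l_j] − α_jk^[l_j] ≥ r_k^[π_k(l_k)], where l_j = π_j(l_j') for some position l_j'. That is, the interference level γ of any user in another cell, reduced by the cross strength α_jk^[l_j], dominates every downlink power exponent in cell k. -/
/-- The positive part `(max_{(l_j,j): j≠k} (α_{kj}^{[π_k(m)]} + r_j^{[l_j]}))⁺` of the
maximal other-cell interference received by user `π_k(m)` of cell `k` (an empty maximum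
is `-∞`, so its positive part is `0`), minus `α_{kk}^{[π_k(m)]}`.
Here `α k l i = α_{ki}^{[l]}` and `r j l` is the downlink power exponent of user `l` of
cell `j`. -/
noncomputable def interfTerm (K : ℕ) (L : Fin K → ℕ)
    (α : (k : Fin K) → Fin (L k) → Fin K → ℝ)
    (r : (k : Fin K) → Fin (L k) → ℝ)
    (π : (k : Fin K) → Equiv.Perm (Fin (L k)))
    (k : Fin K) (m : Fin (L k)) : ℝ :=
  (Finset.univ.filter (fun p : (j : Fin K) × Fin (L j) => p.1 ≠ k)).fold max 0
      (fun p => α k (π k m) p.1 + r p.1 p.2)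
    - α k (π k m) k

/-- The effective interference level `γ_k^{[π_k(l_k)]}` of the downlink (IBC) TIN scheme:
`γ = α_{kk}^{[π_k(l_k)]} + max{ max_{l''>l_k} r_k^{[π_k(l'')]},
max_{m ≥ l_k} ( (max_{(l_j,j): j≠k} (α_{kj}^{[π_k(m)]} + r_j^{[l_j]}))⁺ − α_{kk}^{[π_k(m)]} ) }`,
the two inner maxima being combined over the nonempty index set `{m : m ≥ l_k}`. -/
noncomputable def gam (K : ℕ) (L : Fin K → ℕ)
    (α : (k : Fin K) → Fin (L k) → Fin K → ℝ)
    (r : (k : Fin K) → Fin (L k) → ℝ)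
    (π : (k : Fin K) → Equiv.Perm (Fin (L k)))
    (k : Fin K) (lk : Fin (L k)) : ℝ :=
  α k (π k lk) k +
    (Finset.Ici lk).sup' ⟨lk, Finset.mem_Ici.mpr le_rfl⟩
      (fun m => if lk < m then
          max (r k (π k m)) (interfTerm K L α r π k m)
        else interfTerm K L α r π k m)

section

variable {K : ℕ} {L : Fin K → ℕ} (α : (k : Fin K) → Fin (L k) → Fin K → ℝ)
  (r : (k : Fin K) → Fin (L k) → ℝ) (π : (k : Fin K) → Equiv.Perm (Fin (L k)))

theorem sub_le_interfTerm {j k : Fin K} (hkj : k ≠ j) (m : Fin (L j)) (l : Fin (L k)) :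
    α j (π j m) k + r k l - α j (π j m) j ≤ interfTerm K L α r π j m := by
  have hfold : α j (π j m) k + r k l ≤
      (Finset.univ.filter (fun p : (i : Fin K) × Fin (L i) => p.1 ≠ j)).fold max 0
        (fun p => α j (π j m) p.1 + r p.1 p.2) :=
    Finset.le_fold_max _ |>.mpr <| Or.inr ⟨⟨k, l⟩, by simpa using hkj, le_rfl⟩
  unfold interfTerm
  linarith

theorem add_interfTerm_le_gam (j : Fin K) (lj : Fin (L j)) :
    α j (π j lj) j + interfTerm K L α r π j lj ≤ gam K L α r π j lj := by
  unfold gam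
  gcongr
  refine le_trans ?_ (Finset.le_sup' _ (Finset.mem_Ici.mpr le_rfl))
  simp only [lt_irrefl, if_false, le_refl]

end

theorem stmt7_general (K : ℕ) (L : Fin K → ℕ)
    (α : (k : Fin K) → Fin (L k) → Fin K → ℝ)
    (r : (k : Fin K) → Fin (L k) → ℝ)
    (π : (k : Fin K) → Equiv.Perm (Fin (L k))) :
    ∀ k j : Fin K, j ≠ k → ∀ lj' : Fin (L j), ∀ lk : Fin (L k),
      gam K L α r π j lj' - α j (π j lj') k ≥ r k (π k lk) := by
  intro k j hjk lj' lk
  have hinterf := sub_le_interfTerm α r π hjk.symm lj' (π k lk)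
  have hgam := add_interfTerm_le_gam α r π j lj'
  linarith

/-- equations (85)–(89) in the proof of the duality Lemma 1: for any user
of a cell `j ≠ k` (at decoding position `lj'`, i.e. user `l_j = π_j(lj')`), the interference
level `γ_j^{[l_j]}` reduced by the cross strength `α_{jk}^{[l_j]}` dominates every downlink
power exponent of cell `k`. -/
theorem stmt7 (K : ℕ) (L : Fin K → ℕ)
    (α : (k : Fin K) → Fin (L k) → Fin K → ℝ)
    (r : (k : Fin K) → Fin (L k) → ℝ)
    (π : (k : Fin K) → Equiv.Perm (Fin (L k)))
    (hα : ∀ k l i, 0 ≤ α k l i)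
    (hr : ∀ k l, r k l ≤ 0) :
    ∀ k j : Fin K, j ≠ k → ∀ lj' : Fin (L j), ∀ lk : Fin (L k),
      gam K L α r π j lj' - α j (π j lj') k ≥ r k (π k lk) :=
  stmt7_general K L α r π
end

section
/- Let r̄ ≤ 0 be uplink power exponents satisfying the ordering constraint α_kk^[π_k(l'')] + r̄_k^[π_k(l'')] ≥ α_kk^[π_k(l')] + r̄_k^[π_k(l')] for all l'' > l'. Define γ̄_k^[π_k(l_k)] := max{ 0, max_{l' < l_k} (α_kk^[π_k(l')] + r̄_k^[π_k(l')]), max_{(l_j,j): j≠k} (α_jk^[l_j] + r̄_j^[l_j]) }. Then for every cell k, every l_k, every m_k ≥ l_k, and every user (l_j,j) with j ≠ k: α_kk^[π_k(l_k)] + r̄_k^[π_k(l_k)] ≤ α_kk^[π_k(m_k)] + γ̄_j^[l_j] − α_kj^[π_k(m_k)]. -/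
/-- The uplink (IMAC) effective interference level
`γ̄_k^{[π_k(l_k)]} = max{ 0, max_{l' < l_k} (α_{kk}^{[π_k(l')]} + r̄_k^{[π_k(l')]}),
max_{(l_j,j): j≠k} (α_{jk}^{[l_j]} + r̄_j^{[l_j]}) }`, maxima over empty sets being `-∞`.
Here `α k l i = α_{ki}^{[l]}` is the channel strength between UE-(l,k) and BS-i and
`rb j l` is the uplink power exponent of user `l` of cell `j`. -/
noncomputable def gamBar (K : ℕ) (L : Fin K → ℕ)
    (α : (k : Fin K) → Fin (L k) → Fin K → ℝ)
    (rb : (k : Fin K) → Fin (L k) → ℝ)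
    (π : (k : Fin K) → Equiv.Perm (Fin (L k)))
    (k : Fin K) (lk : Fin (L k)) : ℝ :=
  max
    ((Finset.Iio lk).fold max 0 (fun l' => α k (π k l') k + rb k (π k l')))
    ((Finset.univ.filter (fun p : (j : Fin K) × Fin (L j) => p.1 ≠ k)).fold max 0
      (fun p => α p.1 p.2 k + rb p.1 p.2))

theorem le_gamBar_of_ne (K : ℕ) (L : Fin K → ℕ)
    (α : (k : Fin K) → Fin (L k) → Fin K → ℝ) (rb : (k : Fin K) → Fin (L k) → ℝ)
    (π : (k : Fin K) → Equiv.Perm (Fin (L k))) {j k : Fin K} (lj : Fin (L j)) (lk : Fin (L k))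
    (hjk : j ≠ k) :
    α j lj k + rb j lj ≤ gamBar K L α rb π k lk :=
  le_max_of_le_right <| (Finset.le_fold_max _).mpr <| Or.inr ⟨⟨j, lj⟩, by simpa using hjk, le_rfl⟩

theorem stmt8_general (K : ℕ) (L : Fin K → ℕ)
    (α : (k : Fin K) → Fin (L k) → Fin K → ℝ)
    (rb : (k : Fin K) → Fin (L k) → ℝ)
    (π : (k : Fin K) → Equiv.Perm (Fin (L k)))
    (horder : ∀ k : Fin K, ∀ l' l'' : Fin (L k), l' < l'' →
      α k (π k l') k + rb k (π k l') ≤ α k (π k l'') k + rb k (π k l'')) :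
    ∀ k : Fin K, ∀ lk mk : Fin (L k), lk ≤ mk → ∀ j : Fin K, j ≠ k → ∀ lj' : Fin (L j),
      α k (π k lk) k + rb k (π k lk) ≤
        α k (π k mk) k + gamBar K L α rb π j lj' - α k (π k mk) j := by
  intro k lk mk hlm j hjk lj'
  have hinterf : α k (π k mk) j + rb k (π k mk) ≤ gamBar K L α rb π j lj' :=
    le_gamBar_of_ne K L α rb π (π k mk) lj' hjk.symm
  have hrecv : α k (π k lk) k + rb k (π k lk) ≤ α k (π k mk) k + rb k (π k mk) :=
    monotone_iff_forall_lt.mpr (horder k) hlm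
  linarith

/-- chain of inequalities (127)–(129) in the second part of the duality
Lemma 1: under the ordering constraint on received uplink powers, for every `m_k ≥ l_k`
and every user `(l_j, j)` (at position `lj'`) of another cell `j ≠ k`,
`α_{kk}^{[π_k(l_k)]} + r̄_k^{[π_k(l_k)]} ≤ α_{kk}^{[π_k(m_k)]} + γ̄_j^{[l_j]} − α_{kj}^{[π_k(m_k)]}`. -/
theorem stmt8 (K : ℕ) (L : Fin K → ℕ)
    (α : (k : Fin K) → Fin (L k) → Fin K → ℝ)
    (rb : (k : Fin K) → Fin (L k) → ℝ)
    (π : (k : Fin K) → Equiv.Perm (Fin (L k)))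
    (hα : ∀ k l i, 0 ≤ α k l i)
    (hrb : ∀ k l, rb k l ≤ 0)
    (horder : ∀ k : Fin K, ∀ l' l'' : Fin (L k), l' < l'' →
      α k (π k l') k + rb k (π k l') ≤ α k (π k l'') k + rb k (π k l'')) :
    ∀ k : Fin K, ∀ lk mk : Fin (L k), lk ≤ mk → ∀ j : Fin K, j ≠ k → ∀ lj' : Fin (L j),
      α k (π k lk) k + rb k (π k lk) ≤
        α k (π k mk) k + gamBar K L α rb π j lj' - α k (π k mk) j :=
  stmt8_general K L α rb π horder
end

section
/- In the ADT linear deterministic model over 𝔽₂ with outputs y_a = S^{q−m₁}x₁ ⊕ S^{q−m₂}x₂ and y_b = S^{q−n₁}x₁ ⊕ S^{q−n₂}x₂ (S the q×q down-shift matrix, q = n₁, x₁ and x₂ independent random binary vectors of length q), if n₁ − n₂ ≥ m₁ then I(x₁; y_a) ≤ I(x₁; y_b). -/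
open MeasureTheory ProbabilityTheory

instance : MeasurableSpace (ZMod 2) := ⊤
instance : MeasurableSingletonClass (ZMod 2) := ⟨fun _ => trivial⟩

/-- Shannon entropy, in bits, of a finitely-valued random variable `X` under `μ`. -/
noncomputable def entB {Ω : Type*} [MeasurableSpace Ω] {β : Type*} [Fintype β]
    (μ : Measure Ω) (X : Ω → β) : ℝ :=
  -∑ x : β, ((μ (X ⁻¹' {x})).toReal * Real.logb 2 ((μ (X ⁻¹' {x})).toReal))

/-- Mutual information, in bits, `I(X;Y) = H(X) + H(Y) - H(X,Y)`. -/
noncomputable def miB {Ω : Type*} [MeasurableSpace Ω] {β γ : Type*} [Fintype β] [Fintype γ]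
    (μ : Measure Ω) (X : Ω → β) (Y : Ω → γ) : ℝ :=
  entB μ X + entB μ Y - entB μ (fun ω => (X ω, Y ω))

/-- The `q × q` down-shift matrix `S` over `𝔽₂`, applied `k` times to a vector:
`(S^k x) i = x (i - k)` for `i ≥ k` and `0` otherwise. -/
def downShift (q k : ℕ) (x : Fin q → ZMod 2) : Fin q → ZMod 2 :=
  fun i => if h : k ≤ i.val then
      x ⟨i.val - k, Nat.lt_of_le_of_lt (Nat.sub_le _ _) i.isLt⟩
    else 0

section Gibbs

open Real Finset

lemma gibbs_submod {ι κ L : Type*} [Fintype ι] [Fintype κ] [Fintype L]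
    (p : ι → κ → L → ℝ) (hp : ∀ x y z, 0 ≤ p x y z) :
    (∑ x, ∑ y, ∑ z, negMulLog (p x y z)) + ∑ y, negMulLog (∑ x, ∑ z, p x y z)
      ≤ (∑ x, ∑ y, negMulLog (∑ z, p x y z)) + ∑ y, ∑ z, negMulLog (∑ x, p x y z) := by
  classical
  set p12 : ι → κ → ℝ := fun x y => ∑ z, p x y z with hp12def
  set p23 : κ → L → ℝ := fun y z => ∑ x, p x y z with hp23def
  set p2 : κ → ℝ := fun y => ∑ x, ∑ z, p x y z with hp2def
  have hp12nn : ∀ x y, 0 ≤ p12 x y := fun x y => Finset.sum_nonneg fun z _ => hp x y z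
  have hp23nn : ∀ y z, 0 ≤ p23 y z := fun y z => Finset.sum_nonneg fun x _ => hp x y z
  have hp2nn : ∀ y, 0 ≤ p2 y := fun y => Finset.sum_nonneg fun x _ => hp12nn x y
  have hple12 : ∀ x y z, p x y z ≤ p12 x y := fun x y z =>
    Finset.single_le_sum (fun z _ => hp x y z) (mem_univ z)
  have hple23 : ∀ x y z, p x y z ≤ p23 y z := fun x y z =>
    Finset.single_le_sum (fun x _ => hp x y z) (mem_univ x)
  have h12le2 : ∀ x y, p12 x y ≤ p2 y := fun x y =>
    Finset.single_le_sum (fun x _ => hp12nn x y) (mem_univ x)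
  have hsum2x : ∀ y, ∑ x, p12 x y = p2 y := fun y => rfl
  have hsum2z : ∀ y, ∑ z, p23 y z = p2 y := fun y => Finset.sum_comm
  -- F : the KL-type integrand
  set F : ι → κ → L → ℝ := fun x y z =>
    p x y z * (log (p12 x y) + log (p23 y z) - log (p x y z) - log (p2 y)) with hFdef
  set G : ι → κ → L → ℝ := fun x y z =>
    if 0 < p x y z then p12 x y * p23 y z / p2 y - p x y z else 0 with hGdef
  set H : ι → κ → L → ℝ := fun x y z =>
    if 0 < p2 y then p12 x y * p23 y z / p2 y else 0 with hHdef
  have hFG : ∀ x y z, F x y z ≤ G x y z := by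
    intro x y z
    by_cases hpos : 0 < p x y z
    · have h12 : 0 < p12 x y := lt_of_lt_of_le hpos (hple12 x y z)
      have h23 : 0 < p23 y z := lt_of_lt_of_le hpos (hple23 x y z)
      have h2 : 0 < p2 y := lt_of_lt_of_le h12 (h12le2 x y)
      have ht : 0 < p12 x y * p23 y z / (p x y z * p2 y) :=
        div_pos (mul_pos h12 h23) (mul_pos hpos h2)
      have hlog : log (p12 x y * p23 y z / (p x y z * p2 y))
          = log (p12 x y) + log (p23 y z) - log (p x y z) - log (p2 y) := by
        rw [log_div (by positivity) (by positivity), log_mul (ne_of_gt h12) (ne_of_gt h23),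
          log_mul (ne_of_gt hpos) (ne_of_gt h2)]
        ring
      have hb := Real.log_le_sub_one_of_pos ht
      have := mul_le_mul_of_nonneg_left hb (le_of_lt hpos)
      simp only [hFdef, hGdef, if_pos hpos, ← hlog]
      calc p x y z * log (p12 x y * p23 y z / (p x y z * p2 y))
          ≤ p x y z * (p12 x y * p23 y z / (p x y z * p2 y) - 1) := this
        _ = p12 x y * p23 y z / p2 y - p x y z := by
            field_simp
    · have hz : p x y z = 0 := le_antisymm (not_lt.mp hpos) (hp x y z)
      simp [hFdef, hGdef, hz, hpos]
  have hGH : ∀ x y z, G x y z ≤ H x y z - p x y z := by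
    intro x y z
    by_cases hpos : 0 < p x y z
    · have h2 : 0 < p2 y := lt_of_lt_of_le (lt_of_lt_of_le hpos (hple12 x y z)) (h12le2 x y)
      simp [hGdef, hHdef, hpos, h2]
    · have hz : p x y z = 0 := le_antisymm (not_lt.mp hpos) (hp x y z)
      have hH : 0 ≤ H x y z := by
        simp only [hHdef]
        split
        · exact div_nonneg (mul_nonneg (hp12nn x y) (hp23nn y z)) (hp2nn y)
        · exact le_refl 0
      have hG : G x y z = 0 := by simp [hGdef, hpos]
      rw [hG, hz, sub_zero]
      exact hH
  have hHsum : ∀ y, ∑ x, ∑ z, H x y z ≤ p2 y := by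
    intro y
    by_cases h2 : 0 < p2 y
    · have : ∑ x, ∑ z, H x y z = (∑ x, p12 x y) * (∑ z, p23 y z) / p2 y := by
        simp only [hHdef, if_pos h2]
        rw [Finset.sum_mul, Finset.sum_div]
        refine Finset.sum_congr rfl fun x _ => ?_
        rw [Finset.mul_sum, Finset.sum_div]
      rw [this, hsum2x, hsum2z]
      rw [mul_div_assoc, div_self (ne_of_gt h2), mul_one]
    · have : ∀ x z, H x y z = 0 := fun x z => by simp [hHdef, h2]
      simp [this]
      exact hp2nn y
  -- total F sum ≤ 0
  have hFtot : ∑ x, ∑ y, ∑ z, F x y z ≤ 0 := by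
    have step1 : ∑ x, ∑ y, ∑ z, F x y z ≤ ∑ x, ∑ y, ∑ z, (H x y z - p x y z) := by
      refine Finset.sum_le_sum fun x _ => Finset.sum_le_sum fun y _ => Finset.sum_le_sum fun z _ => ?_
      exact (hFG x y z).trans (hGH x y z)
    have step2 : ∑ x, ∑ y, ∑ z, (H x y z - p x y z) = (∑ x, ∑ y, ∑ z, H x y z) - ∑ x, ∑ y, ∑ z, p x y z := by
      simp [Finset.sum_sub_distrib]
    have step3 : ∑ x, ∑ y, ∑ z, H x y z ≤ ∑ x, ∑ y, ∑ z, p x y z := by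
      rw [Finset.sum_comm (s := univ) (t := univ) (f := fun x y => ∑ z, H x y z),
        Finset.sum_comm (s := univ) (t := univ) (f := fun x y => ∑ z, p x y z)]
      exact Finset.sum_le_sum fun y _ => hHsum y
    linarith [step1, step2, step3]
  -- rewrite the four entropy sums as triple sums
  have e1 : ∑ y, negMulLog (p2 y) = ∑ x, ∑ y, ∑ z, -(p x y z * log (p2 y)) := by
    rw [Finset.sum_comm (s := univ) (t := univ) (f := fun x y => ∑ z, -(p x y z * log (p2 y)))]
    refine Finset.sum_congr rfl fun y _ => ?_
    rw [negMulLog, neg_mul, hp2def]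
    simp only
    rw [Finset.sum_mul, ← Finset.sum_neg_distrib]
    refine Finset.sum_congr rfl fun x _ => ?_
    rw [Finset.sum_mul, ← Finset.sum_neg_distrib]
  have e2 : ∑ x, ∑ y, negMulLog (p12 x y) = ∑ x, ∑ y, ∑ z, -(p x y z * log (p12 x y)) := by
    refine Finset.sum_congr rfl fun x _ => Finset.sum_congr rfl fun y _ => ?_
    rw [negMulLog, neg_mul, hp12def]
    simp only
    rw [Finset.sum_mul, ← Finset.sum_neg_distrib]
  have e3 : ∑ y, ∑ z, negMulLog (p23 y z) = ∑ x, ∑ y, ∑ z, -(p x y z * log (p23 y z)) := by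
    rw [Finset.sum_comm (s := univ) (t := univ) (f := fun x y => ∑ z, -(p x y z * log (p23 y z)))]
    refine Finset.sum_congr rfl fun y _ => ?_
    rw [Finset.sum_comm (s := univ) (t := univ) (f := fun x z => -(p x y z * log (p23 y z)))]
    refine Finset.sum_congr rfl fun z _ => ?_
    rw [negMulLog, neg_mul, hp23def]
    simp only
    rw [Finset.sum_mul, ← Finset.sum_neg_distrib]
  have e4 : ∑ x, ∑ y, ∑ z, negMulLog (p x y z) = ∑ x, ∑ y, ∑ z, -(p x y z * log (p x y z)) := by
    simp [negMulLog, neg_mul]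
  have ekey : ∑ x, ∑ y, ∑ z, F x y z
      = (∑ x, ∑ y, ∑ z, -(p x y z * log (p x y z)))
        + (∑ x, ∑ y, ∑ z, -(p x y z * log (p2 y)))
        - (∑ x, ∑ y, ∑ z, -(p x y z * log (p12 x y)))
        - (∑ x, ∑ y, ∑ z, -(p x y z * log (p23 y z))) := by
    simp only [← Finset.sum_sub_distrib, ← Finset.sum_add_distrib]
    refine Finset.sum_congr rfl fun x _ => Finset.sum_congr rfl fun y _ => Finset.sum_congr rfl fun z _ => ?_
    simp only [hFdef]
    ring
  linarith [hFtot, ekey, e1, e2, e3, e4]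

end Gibbs

section Layer

open Real Finset MeasureTheory ProbabilityTheory

set_option linter.unusedSectionVars false

variable {Ω : Type*} [MeasurableSpace Ω] (μ : Measure Ω) [IsProbabilityMeasure μ]

/-- probability mass -/
noncomputable def pm {β : Type*} (μ : Measure Ω) (X : Ω → β) (x : β) : ℝ :=
  (μ (X ⁻¹' {x})).toReal

/-- natural-log entropy -/
noncomputable def entN {β : Type*} [Fintype β] (μ : Measure Ω) (X : Ω → β) : ℝ :=
  ∑ x : β, Real.negMulLog (pm μ X x)

lemma entB_eq_entN {β : Type*} [Fintype β] (X : Ω → β) :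
    entB μ X = entN μ X / Real.log 2 := by
  rw [entB, entN, Finset.sum_div, ← Finset.sum_neg_distrib]
  refine Finset.sum_congr rfl fun x _ => ?_
  simp only [Real.negMulLog, Real.logb, pm]
  ring

lemma pm_nonneg {β : Type*} (X : Ω → β) (x : β) : 0 ≤ pm μ X x := ENNReal.toReal_nonneg

lemma pm_congr {β γ : Type*} (X : Ω → β) (Y : Ω → γ) (x : β) (y : γ)
    (h : ∀ ω, X ω = x ↔ Y ω = y) : pm μ X x = pm μ Y y := by
  have hs : X ⁻¹' {x} = Y ⁻¹' {y} := by
    ext ω; simpa using h ω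
  unfold pm
  rw [hs]

lemma pm_marg_snd {β γ : Type*} [Fintype γ] [MeasurableSpace β] [MeasurableSpace γ]
    [MeasurableSingletonClass β] [MeasurableSingletonClass γ]
    (X : Ω → β) (Y : Ω → γ) (hX : Measurable X) (hY : Measurable Y) (x : β) :
    ∑ y : γ, pm μ (fun ω => (X ω, Y ω)) (x, y) = pm μ X x := by
  classical
  have hset : ∀ y : γ, (fun ω => (X ω, Y ω)) ⁻¹' {(x, y)} = X ⁻¹' {x} ∩ Y ⁻¹' {y} := by
    intro y; ext ω; simp [Prod.ext_iff]
  have hU : (⋃ y ∈ (univ : Finset γ), (X ⁻¹' {x} ∩ Y ⁻¹' {y})) = X ⁻¹' {x} := by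
    ext ω; simp
  have hdisj : ((univ : Finset γ) : Set γ).PairwiseDisjoint
      (fun y : γ => X ⁻¹' {x} ∩ Y ⁻¹' {y}) := by
    intro a _ b _ hab
    refine Set.disjoint_left.mpr fun ω h1 h2 => hab ?_
    have : Y ω = a := h1.2
    have hb : Y ω = b := h2.2
    rw [← this, hb]
  have hmeas : ∀ y ∈ (univ : Finset γ), MeasurableSet (X ⁻¹' {x} ∩ Y ⁻¹' {y}) :=
    fun y _ => (hX (measurableSet_singleton x)).inter (hY (measurableSet_singleton y))
  have := MeasureTheory.measure_biUnion_finset (μ := μ) hdisj hmeas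
  rw [hU] at this
  unfold pm
  rw [this, ENNReal.toReal_sum (fun a _ => measure_ne_top μ _)]
  exact Finset.sum_congr rfl fun y _ => by rw [hset y]

lemma pm_marg_fst {β γ : Type*} [Fintype β] [MeasurableSpace β] [MeasurableSpace γ]
    [MeasurableSingletonClass β] [MeasurableSingletonClass γ]
    (X : Ω → β) (Y : Ω → γ) (hX : Measurable X) (hY : Measurable Y) (y : γ) :
    ∑ x : β, pm μ (fun ω => (X ω, Y ω)) (x, y) = pm μ Y y := by
  have h := pm_marg_snd μ Y X hY hX y
  rw [← h]
  exact Finset.sum_congr rfl fun x _ =>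
    pm_congr μ (fun ω => (X ω, Y ω)) (fun ω => (Y ω, X ω)) (x, y) (y, x)
      (fun ω => by simp [Prod.ext_iff, and_comm])

lemma sum_pm {β : Type*} [Fintype β] [MeasurableSpace β] [MeasurableSingletonClass β]
    (X : Ω → β) (hX : Measurable X) : ∑ x : β, pm μ X x = 1 := by
  classical
  have hU : (⋃ x ∈ (univ : Finset β), X ⁻¹' {x}) = Set.univ := by
    ext ω; simp
  have hdisj : ((univ : Finset β) : Set β).PairwiseDisjoint (fun x : β => X ⁻¹' {x}) := by
    intro a _ b _ hab
    refine Set.disjoint_left.mpr fun ω h1 h2 => hab ?_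
    have h1' : X ω = a := h1
    have h2' : X ω = b := h2
    rw [← h1', h2']
  have := MeasureTheory.measure_biUnion_finset (μ := μ) hdisj
    (fun x _ => hX (measurableSet_singleton x))
  rw [hU, measure_univ] at this
  unfold pm
  rw [← ENNReal.toReal_sum (fun a _ => measure_ne_top μ _), ← this, ENNReal.toReal_one]

lemma entN_comp_inj {β γ : Type*} [Fintype β] [Fintype γ]
    (X : Ω → β) (g : β → γ) (hg : Function.Injective g) :
    entN μ (fun ω => g (X ω)) = entN μ X := by
  classical
  unfold entN
  rw [← Finset.sum_subset (Finset.subset_univ ((univ : Finset β).image g))]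
  · rw [Finset.sum_image (fun a _ b _ h => hg h)]
    refine Finset.sum_congr rfl fun x _ => ?_
    congr 1
    refine pm_congr μ (fun ω => g (X ω)) X (g x) x fun ω => ?_
    exact ⟨fun h => hg h, fun h => congrArg g h⟩
  · intro y _ hy
    have : (fun ω => g (X ω)) ⁻¹' {y} = ∅ := by
      ext ω
      simp only [Set.mem_preimage, Set.mem_singleton_iff, Set.mem_empty_iff_false, iff_false]
      intro h
      exact hy (Finset.mem_image.mpr ⟨X ω, Finset.mem_univ _, h⟩)
    rw [pm, this]
    simp [Real.negMulLog_zero]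

lemma entN_const {γ : Type*} [Fintype γ] (c : γ) :
    entN μ (fun _ : Ω => c) = 0 := by
  classical
  unfold entN
  rw [Finset.sum_eq_single c]
  · have : (fun _ : Ω => c) ⁻¹' {c} = Set.univ := by ext ω; simp
    rw [pm, this, measure_univ]
    simp [Real.negMulLog_one]
  · intro x _ hx
    have : (fun _ : Ω => c) ⁻¹' {x} = ∅ := by
      ext ω; simp [Ne.symm hx]
    rw [pm, this]
    simp [Real.negMulLog_zero]
  · intro h; exact absurd (Finset.mem_univ c) h

lemma entN_pair_indep {β γ : Type*} [Fintype β] [Fintype γ]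
    [MeasurableSpace β] [MeasurableSpace γ]
    [MeasurableSingletonClass β] [MeasurableSingletonClass γ]
    (X : Ω → β) (Y : Ω → γ) (hX : Measurable X) (hY : Measurable Y)
    (hind : IndepFun X Y μ) :
    entN μ (fun ω => (X ω, Y ω)) = entN μ X + entN μ Y := by
  classical
  have hfac : ∀ x y, pm μ (fun ω => (X ω, Y ω)) (x, y) = pm μ X x * pm μ Y y := by
    intro x y
    have hset : (fun ω => (X ω, Y ω)) ⁻¹' {(x, y)} = X ⁻¹' {x} ∩ Y ⁻¹' {y} := by
      ext ω; simp [Prod.ext_iff]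
    rw [pm, hset, hind.measure_inter_preimage_eq_mul _ _ (measurableSet_singleton x)
      (measurableSet_singleton y), ENNReal.toReal_mul]
    rfl
  unfold entN
  rw [Fintype.sum_prod_type]
  have : ∀ x, ∑ y, Real.negMulLog (pm μ (fun ω => (X ω, Y ω)) (x, y))
      = ∑ y, (pm μ Y y * Real.negMulLog (pm μ X x) + pm μ X x * Real.negMulLog (pm μ Y y)) := by
    intro x
    refine Finset.sum_congr rfl fun y _ => ?_
    rw [hfac, Real.negMulLog_mul]
  simp only [this, Finset.sum_add_distrib, ← Finset.sum_mul, ← Finset.mul_sum]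
  rw [sum_pm μ Y hY, sum_pm μ X hX]
  ring

lemma entN_submod {β γ δ : Type*} [Fintype β] [Fintype γ] [Fintype δ]
    [MeasurableSpace β] [MeasurableSpace γ] [MeasurableSpace δ]
    [MeasurableSingletonClass β] [MeasurableSingletonClass γ] [MeasurableSingletonClass δ]
    (X : Ω → β) (Y : Ω → γ) (Z : Ω → δ)
    (hX : Measurable X) (hY : Measurable Y) (hZ : Measurable Z) :
    entN μ (fun ω => ((X ω, Y ω), Z ω)) + entN μ Y
      ≤ entN μ (fun ω => (X ω, Y ω)) + entN μ (fun ω => (Y ω, Z ω)) := by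
  classical
  set p : β → γ → δ → ℝ := fun x y z => pm μ (fun ω => ((X ω, Y ω), Z ω)) ((x, y), z) with hpdef
  have hpnn : ∀ x y z, 0 ≤ p x y z := fun x y z => pm_nonneg μ _ _
  have key := gibbs_submod p hpnn
  have hXY : Measurable (fun ω => (X ω, Y ω)) := hX.prodMk hY
  have hYZ : Measurable (fun ω => (Y ω, Z ω)) := hY.prodMk hZ
  have hm12 : ∀ x y, ∑ z, p x y z = pm μ (fun ω => (X ω, Y ω)) (x, y) :=
    fun x y => pm_marg_snd μ (fun ω => (X ω, Y ω)) Z hXY hZ (x, y)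
  have hswap : ∀ x y z, p x y z = pm μ (fun ω => (X ω, (Y ω, Z ω))) (x, (y, z)) := by
    intro x y z
    exact pm_congr μ _ _ _ _ fun ω => by simp [Prod.ext_iff, and_assoc]
  have hm23 : ∀ y z, ∑ x, p x y z = pm μ (fun ω => (Y ω, Z ω)) (y, z) := by
    intro y z
    rw [Finset.sum_congr rfl fun x _ => hswap x y z]
    exact pm_marg_fst μ X (fun ω => (Y ω, Z ω)) hX hYZ (y, z)
  have hm2 : ∀ y, ∑ x, ∑ z, p x y z = pm μ Y y := by
    intro y
    rw [Finset.sum_congr rfl fun x _ => hm12 x y]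
    exact pm_marg_fst μ X Y hX hY y
  have eT : entN μ (fun ω => ((X ω, Y ω), Z ω)) = ∑ x, ∑ y, ∑ z, Real.negMulLog (p x y z) := by
    unfold entN
    rw [Fintype.sum_prod_type, Fintype.sum_prod_type]
  have e12 : entN μ (fun ω => (X ω, Y ω)) = ∑ x, ∑ y, Real.negMulLog (∑ z, p x y z) := by
    unfold entN
    rw [Fintype.sum_prod_type]
    exact Finset.sum_congr rfl fun x _ => Finset.sum_congr rfl fun y _ => by rw [hm12]
  have e23 : entN μ (fun ω => (Y ω, Z ω)) = ∑ y, ∑ z, Real.negMulLog (∑ x, p x y z) := by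
    unfold entN
    rw [Fintype.sum_prod_type]
    exact Finset.sum_congr rfl fun y _ => Finset.sum_congr rfl fun z _ => by rw [hm23]
  have e2 : entN μ Y = ∑ y, Real.negMulLog (∑ x, ∑ z, p x y z) := by
    unfold entN
    exact Finset.sum_congr rfl fun y _ => by rw [hm2]
  rw [eT, e12, e23, e2]
  exact key

end Layer

section Final

open Real Finset MeasureTheory ProbabilityTheory

set_option linter.unusedSectionVars false
set_option maxHeartbeats 1000000

variable {Ω : Type*} [MeasurableSpace Ω] (μ : Measure Ω) [IsProbabilityMeasure μ]

lemma miB_eq_entN {β γ : Type*} [Fintype β] [Fintype γ] (X : Ω → β) (Y : Ω → γ) :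
    miB μ X Y = (entN μ X + entN μ Y - entN μ (fun ω => (X ω, Y ω))) / Real.log 2 := by
  rw [miB, entB_eq_entN, entB_eq_entN, entB_eq_entN]; ring

lemma entB_comp_inj {β γ : Type*} [Fintype β] [Fintype γ]
    (X : Ω → β) (g : β → γ) (hg : Function.Injective g) :
    entB μ (fun ω => g (X ω)) = entB μ X := by
  rw [entB_eq_entN, entB_eq_entN, entN_comp_inj μ X g hg]

lemma entB_pair_indep {β γ : Type*} [Fintype β] [Fintype γ]
    [MeasurableSpace β] [MeasurableSpace γ]
    [MeasurableSingletonClass β] [MeasurableSingletonClass γ]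
    (X : Ω → β) (Y : Ω → γ) (hX : Measurable X) (hY : Measurable Y)
    (hind : IndepFun X Y μ) :
    entB μ (fun ω => (X ω, Y ω)) = entB μ X + entB μ Y := by
  rw [entB_eq_entN, entB_eq_entN, entB_eq_entN, entN_pair_indep μ X Y hX hY hind]
  ring

lemma entN_subadd {β δ : Type*} [Fintype β] [Fintype δ]
    [MeasurableSpace β] [MeasurableSpace δ]
    [MeasurableSingletonClass β] [MeasurableSingletonClass δ]
    (X : Ω → β) (Z : Ω → δ) (hX : Measurable X) (hZ : Measurable Z) :
    entN μ (fun ω => (X ω, Z ω)) ≤ entN μ X + entN μ Z := by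
  have hsub := entN_submod μ X (fun _ => ()) Z hX measurable_const hZ
  have e1 : entN μ (fun ω => ((X ω, ()), Z ω)) = entN μ (fun ω => (X ω, Z ω)) := by
    have hinj : Function.Injective (fun p : β × δ => ((p.1, ()), p.2)) := by
      intro p q h
      exact Prod.ext (congrArg (fun r => r.1.1) h) (congrArg (fun r => r.2) h)
    exact entN_comp_inj μ (fun ω => (X ω, Z ω)) _ hinj
  have e2 : entN μ (fun ω => (X ω, ())) = entN μ X := by
    have hinj : Function.Injective (fun a : β => (a, ())) := fun a b h => congrArg Prod.fst h
    exact entN_comp_inj μ X _ hinj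
  have e3 : entN μ (fun ω => ((), Z ω)) = entN μ Z := by
    have hinj : Function.Injective (fun b : δ => ((), b)) := fun a b h => congrArg Prod.snd h
    exact entN_comp_inj μ Z _ hinj
  have e4 : entN μ (fun _ : Ω => ()) = 0 := entN_const μ ()
  linarith [hsub, e1, e2, e3, e4]

lemma entB_subadd {β δ : Type*} [Fintype β] [Fintype δ]
    [MeasurableSpace β] [MeasurableSpace δ]
    [MeasurableSingletonClass β] [MeasurableSingletonClass δ]
    (X : Ω → β) (Z : Ω → δ) (hX : Measurable X) (hZ : Measurable Z) :
    entB μ (fun ω => (X ω, Z ω)) ≤ entB μ X + entB μ Z := by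
  have hlog : (0:ℝ) < Real.log 2 := Real.log_pos one_lt_two
  rw [entB_eq_entN, entB_eq_entN, entB_eq_entN, ← add_div]
  exact (div_le_div_iff_of_pos_right hlog).mpr (entN_subadd μ X Z hX hZ)

lemma miB_comp_le {β γ δ : Type*} [Fintype β] [Fintype γ] [Fintype δ]
    [MeasurableSpace β] [MeasurableSpace γ] [MeasurableSpace δ]
    [MeasurableSingletonClass β] [MeasurableSingletonClass γ] [MeasurableSingletonClass δ]
    (X : Ω → β) (Y : Ω → γ) (g : γ → δ) (hX : Measurable X) (hY : Measurable Y) :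
    miB μ X (fun ω => g (Y ω)) ≤ miB μ X Y := by
  have hgY : Measurable (fun ω => g (Y ω)) := (measurable_of_countable g).comp hY
  have hsub := entN_submod μ X (fun ω => g (Y ω)) Y hX hgY hY
  have e1 : entN μ (fun ω => ((X ω, g (Y ω)), Y ω)) = entN μ (fun ω => (X ω, Y ω)) := by
    have hinj : Function.Injective (fun p : β × γ => ((p.1, g p.2), p.2)) := by
      intro p q h
      exact Prod.ext (congrArg (fun r => r.1.1) h) (congrArg (fun r => r.2) h)
    exact entN_comp_inj μ (fun ω => (X ω, Y ω)) _ hinj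
  have e2 : entN μ (fun ω => (g (Y ω), Y ω)) = entN μ Y := by
    have hinj : Function.Injective (fun b : γ => (g b, b)) := fun a b h => congrArg Prod.snd h
    exact entN_comp_inj μ Y _ hinj
  have hlog : (0:ℝ) < Real.log 2 := Real.log_pos one_lt_two
  have key : entN μ X + entN μ (fun ω => g (Y ω)) - entN μ (fun ω => (X ω, g (Y ω)))
      ≤ entN μ X + entN μ Y - entN μ (fun ω => (X ω, Y ω)) := by
    linarith [hsub, e1, e2]
  rw [miB_eq_entN, miB_eq_entN]
  exact (div_le_div_iff_of_pos_right hlog).mpr key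

end Final

section Shift

/-- the top `m` bits of a length-`n` vector -/
def topBits (n m : ℕ) (hmax : m ≤ n) (v : Fin n → ZMod 2) : Fin m → ZMod 2 :=
  fun j => v ⟨j.1, lt_of_lt_of_le j.2 hmax⟩

/-- place `m` bits at the bottom of a length-`n` vector -/
def padBits (n m : ℕ) (hmax : m ≤ n) (t : Fin m → ZMod 2) : Fin n → ZMod 2 :=
  fun i => if h : n - m ≤ i.1 then t ⟨i.1 - (n - m), by have := i.isLt; omega⟩ else 0

lemma padBits_inj (n m : ℕ) (hmax : m ≤ n) : Function.Injective (padBits n m hmax) := by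
  intro t t' h
  funext j
  have hj : j.1 + (n - m) < n := by have := j.isLt; omega
  have h2 := congrFun h ⟨j.1 + (n - m), hj⟩
  simp only [padBits] at h2
  rw [dif_pos (show n - m ≤ j.1 + (n - m) by omega),
    dif_pos (show n - m ≤ j.1 + (n - m) by omega)] at h2
  have hidx : (⟨j.1 + (n - m) - (n - m), by have := j.isLt; omega⟩ : Fin m) = j := by
    apply Fin.ext
    simp only []
    omega
  rwa [hidx] at h2

lemma downShift_eq_pad_top (n m : ℕ) (hmax : m ≤ n) (v : Fin n → ZMod 2) :
    downShift n (n - m) v = padBits n m hmax (topBits n m hmax v) := by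
  funext i
  simp only [downShift, padBits, topBits]

end Shift


set_option maxHeartbeats 1000000

/-- equation (148): in the ADT linear deterministic model with `q = n₁`,
outputs `y_a = S^{q−m₁}x₁ ⊕ S^{q−m₂}x₂` and `y_b = S^{q−n₁}x₁ ⊕ S^{q−n₂}x₂`, if
`n₁ − n₂ ≥ m₁` then `I(x₁; y_a) ≤ I(x₁; y_b)`: receiver `b` is more capable under
interference. -/
theorem stmt12 {Ω : Type*} [MeasurableSpace Ω] (μ : Measure Ω) [IsProbabilityMeasure μ]
    (m₁ m₂ n₁ n₂ : ℕ) (hm : m₂ ≤ m₁) (hn : n₂ ≤ n₁) (hmax : m₁ ≤ n₁)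
    (hcond : m₁ + n₂ ≤ n₁)
    (x₁ x₂ : Ω → Fin n₁ → ZMod 2)
    (hx₁ : Measurable x₁) (hx₂ : Measurable x₂)
    (hindep : IndepFun x₁ x₂ μ) :
    miB μ x₁ (fun ω => downShift n₁ (n₁ - m₁) (x₁ ω) + downShift n₁ (n₁ - m₂) (x₂ ω)) ≤
    miB μ x₁ (fun ω => downShift n₁ (n₁ - n₁) (x₁ ω) + downShift n₁ (n₁ - n₂) (x₂ ω)) := by
  classical
  have hA : Measurable (fun ω => downShift n₁ (n₁ - m₁) (x₁ ω)) :=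
    (measurable_of_countable (downShift n₁ (n₁ - m₁))).comp hx₁
  have hB : Measurable (fun ω => downShift n₁ (n₁ - m₂) (x₂ ω)) :=
    (measurable_of_countable (downShift n₁ (n₁ - m₂))).comp hx₂
  have hya : Measurable (fun ω => downShift n₁ (n₁ - m₁) (x₁ ω) + downShift n₁ (n₁ - m₂) (x₂ ω)) :=
    (measurable_of_countable (fun p : (Fin n₁ → ZMod 2) × (Fin n₁ → ZMod 2) =>
      downShift n₁ (n₁ - m₁) p.1 + downShift n₁ (n₁ - m₂) p.2)).comp (hx₁.prodMk hx₂)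
  have hyb : Measurable (fun ω => downShift n₁ (n₁ - n₁) (x₁ ω) + downShift n₁ (n₁ - n₂) (x₂ ω)) :=
    (measurable_of_countable (fun p : (Fin n₁ → ZMod 2) × (Fin n₁ → ZMod 2) =>
      downShift n₁ (n₁ - n₁) p.1 + downShift n₁ (n₁ - n₂) p.2)).comp (hx₁.prodMk hx₂)
  have φinj : Function.Injective
      (fun p : (Fin n₁ → ZMod 2) × (Fin n₁ → ZMod 2) => (p.1 + p.2, p.2)) := by
    intro p q h
    simp only [Prod.mk.injEq] at h
    obtain ⟨h1, h2⟩ := h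
    rw [h2] at h1
    exact Prod.ext (add_right_cancel h1) h2
  have step1 : miB μ x₁ (fun ω => downShift n₁ (n₁ - m₁) (x₁ ω) + downShift n₁ (n₁ - m₂) (x₂ ω))
      ≤ miB μ x₁ (fun ω => (downShift n₁ (n₁ - m₁) (x₁ ω) + downShift n₁ (n₁ - m₂) (x₂ ω),
          downShift n₁ (n₁ - m₂) (x₂ ω))) := by
    have h := miB_comp_le μ x₁
      (fun ω => (downShift n₁ (n₁ - m₁) (x₁ ω) + downShift n₁ (n₁ - m₂) (x₂ ω),
        downShift n₁ (n₁ - m₂) (x₂ ω))) Prod.fst hx₁ (hya.prodMk hB)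
    exact h
  have step2 : miB μ x₁ (fun ω => (downShift n₁ (n₁ - m₁) (x₁ ω) + downShift n₁ (n₁ - m₂) (x₂ ω),
          downShift n₁ (n₁ - m₂) (x₂ ω)))
      = miB μ x₁ (fun ω => (downShift n₁ (n₁ - m₁) (x₁ ω), downShift n₁ (n₁ - m₂) (x₂ ω))) := by
    have ea : entB μ (fun ω => (downShift n₁ (n₁ - m₁) (x₁ ω) + downShift n₁ (n₁ - m₂) (x₂ ω),
            downShift n₁ (n₁ - m₂) (x₂ ω)))
        = entB μ (fun ω => (downShift n₁ (n₁ - m₁) (x₁ ω), downShift n₁ (n₁ - m₂) (x₂ ω))) := by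
      have h := entB_comp_inj μ
        (fun ω => (downShift n₁ (n₁ - m₁) (x₁ ω), downShift n₁ (n₁ - m₂) (x₂ ω)))
        (fun p : (Fin n₁ → ZMod 2) × (Fin n₁ → ZMod 2) => (p.1 + p.2, p.2)) φinj
      exact h
    have hinj : Function.Injective
        (fun p : (Fin n₁ → ZMod 2) × ((Fin n₁ → ZMod 2) × (Fin n₁ → ZMod 2)) =>
          (p.1, (p.2.1 + p.2.2, p.2.2))) := by
      intro p q h
      simp only [Prod.mk.injEq] at h
      obtain ⟨h1, h2, h3⟩ := h
      rw [h3] at h2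
      exact Prod.ext h1 (Prod.ext (add_right_cancel h2) h3)
    have eb : entB μ (fun ω => (x₁ ω, (downShift n₁ (n₁ - m₁) (x₁ ω) + downShift n₁ (n₁ - m₂) (x₂ ω),
            downShift n₁ (n₁ - m₂) (x₂ ω))))
        = entB μ (fun ω => (x₁ ω, (downShift n₁ (n₁ - m₁) (x₁ ω), downShift n₁ (n₁ - m₂) (x₂ ω)))) := by
      have h := entB_comp_inj μ
        (fun ω => (x₁ ω, (downShift n₁ (n₁ - m₁) (x₁ ω), downShift n₁ (n₁ - m₂) (x₂ ω))))
        (fun p : (Fin n₁ → ZMod 2) × ((Fin n₁ → ZMod 2) × (Fin n₁ → ZMod 2)) =>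
          (p.1, (p.2.1 + p.2.2, p.2.2))) hinj
      exact h
    rw [miB, miB, ea, eb]
  have step3 : miB μ x₁ (fun ω => (downShift n₁ (n₁ - m₁) (x₁ ω), downShift n₁ (n₁ - m₂) (x₂ ω)))
      ≤ entB μ (fun ω => topBits n₁ m₁ hmax (x₁ ω)) := by
    have hinj : Function.Injective
        (fun p : (Fin n₁ → ZMod 2) × (Fin n₁ → ZMod 2) =>
          (p.1, (downShift n₁ (n₁ - m₁) p.1, p.2))) := by
      intro p q h
      simp only [Prod.mk.injEq] at h
      exact Prod.ext h.1 h.2.2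
    have f1 : entB μ (fun ω => (x₁ ω, (downShift n₁ (n₁ - m₁) (x₁ ω), downShift n₁ (n₁ - m₂) (x₂ ω))))
        = entB μ (fun ω => (x₁ ω, downShift n₁ (n₁ - m₂) (x₂ ω))) := by
      have h := entB_comp_inj μ (fun ω => (x₁ ω, downShift n₁ (n₁ - m₂) (x₂ ω)))
        (fun p : (Fin n₁ → ZMod 2) × (Fin n₁ → ZMod 2) =>
          (p.1, (downShift n₁ (n₁ - m₁) p.1, p.2))) hinj
      exact h
    have hindB : IndepFun x₁ (fun ω => downShift n₁ (n₁ - m₂) (x₂ ω)) μ := by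
      have h := hindep.comp measurable_id (measurable_of_countable (downShift n₁ (n₁ - m₂)))
      exact h
    have f2 : entB μ (fun ω => (x₁ ω, downShift n₁ (n₁ - m₂) (x₂ ω)))
        = entB μ x₁ + entB μ (fun ω => downShift n₁ (n₁ - m₂) (x₂ ω)) := by
      have h := entB_pair_indep μ x₁ (fun ω => downShift n₁ (n₁ - m₂) (x₂ ω)) hx₁ hB hindB
      exact h
    have f3 : entB μ (fun ω => (downShift n₁ (n₁ - m₁) (x₁ ω), downShift n₁ (n₁ - m₂) (x₂ ω)))
        ≤ entB μ (fun ω => downShift n₁ (n₁ - m₁) (x₁ ω))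
          + entB μ (fun ω => downShift n₁ (n₁ - m₂) (x₂ ω)) := by
      have h := entB_subadd μ (fun ω => downShift n₁ (n₁ - m₁) (x₁ ω))
        (fun ω => downShift n₁ (n₁ - m₂) (x₂ ω)) hA hB
      exact h
    have f4 : entB μ (fun ω => downShift n₁ (n₁ - m₁) (x₁ ω))
        = entB μ (fun ω => topBits n₁ m₁ hmax (x₁ ω)) := by
      have hfe : (fun ω => downShift n₁ (n₁ - m₁) (x₁ ω))
          = fun ω => padBits n₁ m₁ hmax (topBits n₁ m₁ hmax (x₁ ω)) := by
        funext ω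
        exact downShift_eq_pad_top n₁ m₁ hmax (x₁ ω)
      rw [hfe]
      have h := entB_comp_inj μ (fun ω => topBits n₁ m₁ hmax (x₁ ω))
        (padBits n₁ m₁ hmax) (padBits_inj n₁ m₁ hmax)
      exact h
    rw [miB]
    linarith [f1, f2, f3, f4]
  have hTyb : (fun ω => topBits n₁ m₁ hmax
        (downShift n₁ (n₁ - n₁) (x₁ ω) + downShift n₁ (n₁ - n₂) (x₂ ω)))
      = fun ω => topBits n₁ m₁ hmax (x₁ ω) := by
    funext ω
    funext j
    have hj := j.isLt
    simp only [topBits, Pi.add_apply, downShift]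
    rw [dif_pos (by omega), dif_neg (by omega), add_zero]
    congr 1
    apply Fin.ext
    simp only []
    omega
  have step4 : entB μ (fun ω => topBits n₁ m₁ hmax (x₁ ω))
      = miB μ x₁ (fun ω => topBits n₁ m₁ hmax
          (downShift n₁ (n₁ - n₁) (x₁ ω) + downShift n₁ (n₁ - n₂) (x₂ ω))) := by
    rw [hTyb, miB]
    have hinj : Function.Injective
        (fun v : Fin n₁ → ZMod 2 => (v, topBits n₁ m₁ hmax v)) := by
      intro a b h
      simp only [Prod.mk.injEq] at h
      exact h.1
    have hpair : entB μ (fun ω => (x₁ ω, topBits n₁ m₁ hmax (x₁ ω))) = entB μ x₁ := by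
      have h := entB_comp_inj μ x₁
        (fun v : Fin n₁ → ZMod 2 => (v, topBits n₁ m₁ hmax v)) hinj
      exact h
    rw [hpair]
    ring
  have step5 : miB μ x₁ (fun ω => topBits n₁ m₁ hmax
        (downShift n₁ (n₁ - n₁) (x₁ ω) + downShift n₁ (n₁ - n₂) (x₂ ω)))
      ≤ miB μ x₁ (fun ω => downShift n₁ (n₁ - n₁) (x₁ ω) + downShift n₁ (n₁ - n₂) (x₂ ω)) := by
    have h := miB_comp_le μ x₁
      (fun ω => downShift n₁ (n₁ - n₁) (x₁ ω) + downShift n₁ (n₁ - n₂) (x₂ ω))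
      (topBits n₁ m₁ hmax) hx₁ hyb
    exact h
  linarith [step1, step2, step3, step4, step5]
end

section
/- Sorted-subset ordering lemma: Let ℓ'' = {q(1) < q(2) < ⋯ < q(L'')} be a subset of {1,…,l−1}, and set q(L''+1) = l. Suppose nonnegative reals α^[s] (direct strengths, nondecreasing in s) and β^[s] (interference strengths) satisfy: (i) for every q(s) ∈ ℓ'': α^[l] − β^[l] < α^[q(s)] (membership condition), (ii) TIN condition: for all s' < s in {1,…,l}, α^[s] ≥ β^[s] + α^[s'] or α^[s] ≥ 2β^[s] + α^[s'] − β^[s'], and (iii) the complement ℓ' = {1,…,l}∖ℓ'' consists of l and indices p with α^[l] − β^[l] ≥ α^[p]. Then for every s ∈ {1,…,L''}: α^[q(s+1)] − β^[q(s+1)] < α^[q(s)] and α^[q(s+1)] − 2β^[q(s+1)] ≥ α^[q(s)] − β^[q(s)]. -/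
/-! Under the TIN condition the "effective strength" `α s - β s` is nondecreasing in `s`.
Hence `α (q (s+1)) - β (q (s+1)) ≤ α l - β l < α (q s)`, the last step being membership of
`q s`. This rules out the first branch of the TIN dichotomy for the pair `q s < q (s+1)`,
and the second branch is the second claim. -/

lemma sub_le_sub_of_tin {x y a b : ℝ} (ha : 0 ≤ a) (hb : 0 ≤ b)
    (h : y ≥ b + x ∨ y ≥ 2 * b + x - a) : x - a ≤ y - b := by
  rcases h with h | h <;> linarith

lemma monotoneOn_sub_of_tin {l : ℕ} {α β : ℕ → ℝ} (hβ : ∀ s, 0 ≤ β s)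
    (hTIN : ∀ s' s, 1 ≤ s' → s' < s → s ≤ l →
      (α s ≥ β s + α s' ∨ α s ≥ 2 * β s + α s' - β s')) :
    MonotoneOn (fun s => α s - β s) (Set.Icc 1 l) := by
  rintro s' ⟨hs', -⟩ s ⟨-, hsl⟩ hle
  rcases hle.eq_or_lt with rfl | hlt
  · exact le_rfl
  · exact sub_le_sub_of_tin (hβ s') (hβ s) (hTIN s' s hs' hlt hsl)

lemma chain_step {l L : ℕ} {q : ℕ → ℕ}
    (hqmono : ∀ s s', 1 ≤ s → s < s' → s' ≤ L → q s < q s')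
    (hqrange : ∀ s, 1 ≤ s → s ≤ L → 1 ≤ q s ∧ q s ≤ l - 1)
    (hqtop : q (L + 1) = l) {s : ℕ} (hs : 1 ≤ s) (hsL : s ≤ L) :
    1 ≤ q s ∧ q s < q (s + 1) ∧ q (s + 1) ≤ l := by
  obtain ⟨hq1, hql⟩ := hqrange s hs hsL
  rcases hsL.lt_or_eq with hlt | rfl
  · have := hqmono s (s + 1) hs (lt_add_one s) hlt
    have := hqrange (s + 1) (by omega) hlt
    omega
  · rw [hqtop]
    omega

theorem stmt14_general (l L'' : ℕ) (α β : ℕ → ℝ)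
    (hβ : ∀ s, 0 ≤ β s)
    (q : ℕ → ℕ)
    (hqmono : ∀ s s', 1 ≤ s → s < s' → s' ≤ L'' → q s < q s')
    (hqrange : ∀ s, 1 ≤ s → s ≤ L'' → 1 ≤ q s ∧ q s ≤ l - 1)
    (hqtop : q (L'' + 1) = l)
    (hmember : ∀ s, 1 ≤ s → s ≤ L'' → α l - β l < α (q s))
    (hTIN : ∀ s' s, 1 ≤ s' → s' < s → s ≤ l →
      (α s ≥ β s + α s' ∨ α s ≥ 2 * β s + α s' - β s')) :
    ∀ s, 1 ≤ s → s ≤ L'' →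
      α (q (s + 1)) - β (q (s + 1)) < α (q s) ∧
      α (q (s + 1)) - 2 * β (q (s + 1)) ≥ α (q s) - β (q s) := by
  intro s hs hsL
  obtain ⟨hq1, hlt, hle⟩ := chain_step hqmono hqrange hqtop hs hsL
  have first : α (q (s + 1)) - β (q (s + 1)) < α (q s) :=
    (monotoneOn_sub_of_tin hβ hTIN ⟨by omega, hle⟩ ⟨by omega, le_rfl⟩ hle).trans_lt
      (hmember s hs hsL)
  refine ⟨first, ?_⟩
  have := (hTIN (q s) (q (s + 1)) hq1 hlt hle).resolve_left (by linarith)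
  linarith

/-- Lemma 4 of the outer-bound proof, single cell: let `α s` be the direct
strength of user `s` and `β s` the interference strength from the preceding cell in the
cycle, for users `s ∈ {1,…,l}` sorted by ascending `α`. Let `q 1 < ⋯ < q L''` enumerate the
subset of `{1,…,l-1}` of users "not more noisy" than user `l`, with `q (L''+1) = l`.
Then along this chain, each user is not less noisy than its predecessor. -/
theorem stmt14 (l L'' : ℕ) (hl : 1 ≤ l) (α β : ℕ → ℝ)
    (hα : ∀ s, 0 ≤ α s) (hβ : ∀ s, 0 ≤ β s)
    (hmono : ∀ s s', 1 ≤ s → s ≤ s' → s' ≤ l → α s ≤ α s')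
    (q : ℕ → ℕ)
    (hqmono : ∀ s s', 1 ≤ s → s < s' → s' ≤ L'' → q s < q s')
    (hqrange : ∀ s, 1 ≤ s → s ≤ L'' → 1 ≤ q s ∧ q s ≤ l - 1)
    (hqtop : q (L'' + 1) = l)
    (hmember : ∀ s, 1 ≤ s → s ≤ L'' → α l - β l < α (q s))
    (hTIN : ∀ s' s, 1 ≤ s' → s' < s → s ≤ l →
      (α s ≥ β s + α s' ∨ α s ≥ 2 * β s + α s' - β s'))
    (hcompl : ∀ p, 1 ≤ p → p ≤ l → p ≠ l → (∀ s, 1 ≤ s → s ≤ L'' → q s ≠ p) →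
      α l - β l ≥ α p) :
    ∀ s, 1 ≤ s → s ≤ L'' →
      α (q (s + 1)) - β (q (s + 1)) < α (q s) ∧
      α (q (s + 1)) - 2 * β (q (s + 1)) ≥ α (q s) - β (q s) :=
  stmt14_general l L'' α β hβ q hqmono hqrange hqtop hmember hTIN
end
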